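/- arXiv:2303.06389 — 6 statements merged into one kernel-verified Lean document; each statement's English description precedes it below -/
import Mathlib

section
/- Under the contextual-bandit off-policy setup with N ≥ 1 i.i.d. logged samples and any measurable weight function φ, the mean squared error of the UIPS estimator is upper bounded as: E_D[(V̂_UIPS(π) − V(π))²] ≤ E_{β*}[ (π(a|x)/β*(a|x))² r(x,a)² ] · E_{β*}[ ( (β*(a|x)/β̂(a|x)) φ(x,a) − 1 )² ] + E_{β*}[ (π(a|x)/β̂(a|x))² φ(x,a)² ]. -/
/-!
The mean squared error of the sample mean of `g = π φ r / β̂` splits into variance and squared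
bias. The variance is `Var[g] / N ≤ E[g²] ≤ E[(π/β̂)² φ²]` since `0 ≤ r ≤ 1`. For the bias, the
importance-sampling identity `V(π) = E[u]` with `u = (π/β*) r` gives
`E[g] - V(π) = E[u v]` where `v = (β*/β̂) φ - 1`, and Cauchy–Schwarz bounds its square by
`E[u²] E[v²]`.
-/

open MeasureTheory ProbabilityTheory

section SampleMean

variable {α : Type*} [MeasurableSpace α] {μ : Measure α}

theorem integral_mul_sq_le_integral_sq_mul_integral_sq {u v : α → ℝ}
    (hu : MemLp u 2 μ) (hv : MemLp v 2 μ) :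
    (∫ z, u z * v z ∂μ) ^ 2 ≤ (∫ z, u z ^ 2 ∂μ) * ∫ z, v z ^ 2 ∂μ := by
  have inner_toLp : ∀ {f g : α → ℝ} (hf : MemLp f 2 μ) (hg : MemLp g 2 μ),
      inner ℝ (hf.toLp f) (hg.toLp g) = ∫ z, f z * g z ∂μ := fun hf hg => by
    rw [L2.inner_def]
    refine integral_congr_ae ?_
    filter_upwards [hf.coeFn_toLp, hg.coeFn_toLp] with z hfz hgz
    simp [hfz, hgz, mul_comm]
  simpa only [inner_toLp, sq] using real_inner_mul_inner_self_le (hu.toLp u) (hv.toLp v)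

theorem integral_sub_const_sq [IsProbabilityMeasure μ] {W : α → ℝ} (hW : MemLp W 2 μ) (c : ℝ) :
    ∫ z, (W z - c) ^ 2 ∂μ = Var[W; μ] + (∫ z, W z ∂μ - c) ^ 2 := by
  have hWc : MemLp (fun z => W z - c) 2 μ := hW.sub (memLp_const c)
  rw [← variance_sub_const hW.aestronglyMeasurable c, variance_eq_sub hWc,
    integral_sub (hW.integrable one_le_two) (integrable_const c)]
  simp

variable {Ω ι : Type*} [MeasurableSpace Ω] {P : Measure Ω}
  [IsProbabilityMeasure P] [Fintype ι] [Nonempty ι] {S : ι → Ω → α}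

theorem integral_sampleMean_sub_sq (hS : ∀ i, MeasurePreserving (S i) P μ)
    (hind : Pairwise fun i j => S i ⟂ᵢ[P] S j)
    {g : α → ℝ} (hg : Measurable g) (hg2 : MemLp g 2 μ) (c : ℝ) :
    ∫ ω, ((1 / Fintype.card ι : ℝ) * ∑ i, g (S i ω) - c) ^ 2 ∂P
      = Var[g; μ] / Fintype.card ι + (∫ z, g z ∂μ - c) ^ 2 := by
  have hn : (Fintype.card ι : ℝ) ≠ 0 := Nat.cast_ne_zero.2 Fintype.card_ne_zero
  have hY : ∀ i, MemLp (fun ω => g (S i ω)) 2 P := fun i => hg2.comp_measurePreserving (hS i)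
  have hsum : MemLp (fun ω => ∑ i, g (S i ω)) 2 P := memLp_finsetSum _ fun i _ => hY i
  have hmean : ∫ ω, (1 / Fintype.card ι : ℝ) * ∑ i, g (S i ω) ∂P = ∫ z, g z ∂μ := by
    have hEY : ∀ i, ∫ ω, g (S i ω) ∂P = ∫ z, g z ∂μ := fun i => by
      rw [← (hS i).map_eq, integral_map (hS i).aemeasurable hg.aestronglyMeasurable]
    rw [integral_const_mul, integral_finsetSum _ fun i _ => (hY i).integrable one_le_two]
    simp only [hEY, Finset.sum_const, Finset.card_univ, nsmul_eq_mul]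
    field_simp
  have hvar : Var[fun ω => (1 / Fintype.card ι : ℝ) * ∑ i, g (S i ω); P]
      = Var[g; μ] / Fintype.card ι := by
    have hpair : Set.Pairwise (Finset.univ : Finset ι)
        fun i j => (fun ω => g (S i ω)) ⟂ᵢ[P] fun ω => g (S j ω) :=
      fun i _ j _ hij => (hind hij).comp hg hg
    rw [variance_const_mul, ← Finset.sum_fn, IndepFun.variance_sum (fun i _ => hY i) hpair]
    simp only [fun i => (hS i).variance_fun_comp hg.aemeasurable, Finset.sum_const,
      Finset.card_univ, nsmul_eq_mul]
    field_simp
  rw [integral_sub_const_sq (hsum.const_mul _), hvar, hmean]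

theorem integral_sampleMean_sub_sq_le [IsProbabilityMeasure μ]
    (hS : ∀ i, MeasurePreserving (S i) P μ)
    (hind : Pairwise fun i j => S i ⟂ᵢ[P] S j)
    {g u v : α → ℝ} (hg : Measurable g) (hg2 : MemLp g 2 μ) (hu : MemLp u 2 μ)
    (hv : MemLp v 2 μ) (hguv : ∀ z, g z - u z = u z * v z) :
    ∫ ω, ((1 / Fintype.card ι : ℝ) * ∑ i, g (S i ω) - ∫ z, u z ∂μ) ^ 2 ∂P
      ≤ (∫ z, u z ^ 2 ∂μ) * (∫ z, v z ^ 2 ∂μ) + ∫ z, g z ^ 2 ∂μ := by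
  rw [integral_sampleMean_sub_sq hS hind hg hg2,
    ← integral_sub (hg2.integrable one_le_two) (hu.integrable one_le_two),
    integral_congr_ae (ae_of_all _ hguv), add_comm]
  refine add_le_add (integral_mul_sq_le_integral_sq_mul_integral_sq hu hv) ?_
  exact (div_le_self (variance_nonneg g μ) (Nat.one_le_cast.2 Fintype.card_pos)).trans
    (variance_le_expectation_sq hg2.aestronglyMeasurable)

end SampleMean

theorem integral_sum_policy_mul_eq_integral_div_mul {X A : Type*} [MeasurableSpace X]
    [MeasurableSpace A] [Fintype A] {p : Measure X} {μ : Measure (X × A)}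
    {pol bstar : X → A → ℝ} (hbstar : ∀ x a, bstar x a ≠ 0)
    (hμ : ∀ g : X × A → ℝ, Integrable g μ → ∫ z, g z ∂μ = ∫ x, ∑ a, bstar x a * g (x, a) ∂p)
    {r : X × A → ℝ} (hint : Integrable (fun z => pol z.1 z.2 / bstar z.1 z.2 * r z) μ) :
    ∫ x, ∑ a, pol x a * r (x, a) ∂p = ∫ z, pol z.1 z.2 / bstar z.1 z.2 * r z ∂μ := by
  rw [hμ _ hint]
  refine integral_congr_ae (ae_of_all _ fun x => Finset.sum_congr rfl fun a _ => ?_)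
  have := hbstar x a
  field_simp

theorem stmt_2_general
    {X : Type*} [MeasurableSpace X] (p : Measure X) [IsProbabilityMeasure p]
    {A : Type*} [Fintype A] [MeasurableSpace A] [MeasurableSingletonClass A]
    (pol bstar bhat : X → A → ℝ)
    (hpol_meas : ∀ a, Measurable fun x => pol x a)
    (hbhat_meas : ∀ a, Measurable fun x => bhat x a)
    (hbstar_pos : ∀ x a, 0 < bstar x a)
    (r : X × A → ℝ) (hr_meas : Measurable r)
    (hr0 : ∀ z, 0 ≤ r z) (hr1 : ∀ z, r z ≤ 1)
    (φ : X × A → ℝ) (hφ_meas : Measurable φ)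
    {Ω : Type*} [MeasurableSpace Ω] (P : Measure Ω) [IsProbabilityMeasure P]
    (N : ℕ) (hN : 1 ≤ N)
    (S : Fin N → Ω → X × A) (hS_meas : ∀ n, Measurable (S n))
    (hS_indep : ProbabilityTheory.iIndepFun S P)
    (μ : Measure (X × A)) [IsProbabilityMeasure μ]
    (hlaw : ∀ n, Measure.map (S n) P = μ)
    (hμ : ∀ g : X × A → ℝ, Integrable g μ →
      ∫ z, g z ∂μ = ∫ x, ∑ a, bstar x a * g (x, a) ∂p)
    (hL2a : MemLp (fun z : X × A => pol z.1 z.2 * φ z * r z / bhat z.1 z.2) 2 μ)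
    (hL2b : MemLp (fun z : X × A => pol z.1 z.2 * φ z / bhat z.1 z.2) 2 μ)
    (hL2c : MemLp (fun z : X × A => pol z.1 z.2 / bstar z.1 z.2) 2 μ)
    (hL2d : MemLp (fun z : X × A => bstar z.1 z.2 / bhat z.1 z.2 * φ z - 1) 2 μ) :
    (∫ ω, ((1 / (N : ℝ)) * ∑ n : Fin N,
          pol (S n ω).1 (S n ω).2 / bhat (S n ω).1 (S n ω).2 * φ (S n ω) * r (S n ω)
        - ∫ x, ∑ a, pol x a * r (x, a) ∂p) ^ 2 ∂P)
      ≤ (∫ x, ∑ a, bstar x a * ((pol x a / bstar x a) ^ 2 * r (x, a) ^ 2) ∂p)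
          * (∫ x, ∑ a, bstar x a * (bstar x a / bhat x a * φ (x, a) - 1) ^ 2 ∂p)
        + ∫ x, ∑ a, bstar x a * ((pol x a / bhat x a) ^ 2 * φ (x, a) ^ 2) ∂p := by
  set g : X × A → ℝ := fun z => pol z.1 z.2 / bhat z.1 z.2 * φ z * r z
  set u : X × A → ℝ := fun z => pol z.1 z.2 / bstar z.1 z.2 * r z
  have hg_meas : Measurable g := (((measurable_from_prod_countable_left hpol_meas).div
    (measurable_from_prod_countable_left hbhat_meas)).mul hφ_meas).mul hr_meas
  have hg : MemLp g 2 μ := by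
    convert hL2a using 2 with z; simp only [g]; ring
  have hu : MemLp u 2 μ := (memLp_top_of_bound hr_meas.aestronglyMeasurable 1
    (ae_of_all _ fun z => abs_le.2 ⟨by linarith [hr0 z], hr1 z⟩)).mul' hL2c
  have hguv : ∀ z, g z - u z = u z * (bstar z.1 z.2 / bhat z.1 z.2 * φ z - 1) := fun z => by
    have := (hbstar_pos z.1 z.2).ne'
    simp only [g, u]; field_simp
  have hg2 : ∫ z, g z ^ 2 ∂μ
      ≤ ∫ x, ∑ a, bstar x a * ((pol x a / bhat x a) ^ 2 * φ (x, a) ^ 2) ∂p :=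
    calc ∫ z, g z ^ 2 ∂μ ≤ ∫ z, (pol z.1 z.2 * φ z / bhat z.1 z.2) ^ 2 ∂μ :=
          integral_mono hg.integrable_sq hL2b.integrable_sq fun z => by
            simp only [g, mul_pow, ← div_mul_eq_mul_div]
            exact mul_le_of_le_one_right (by positivity) (pow_le_one₀ (hr0 z) (hr1 z))
      _ = _ := by rw [hμ _ hL2b.integrable_sq]; simp only [← div_mul_eq_mul_div, mul_pow]
  have hu2 : ∫ z, u z ^ 2 ∂μ
      = ∫ x, ∑ a, bstar x a * ((pol x a / bstar x a) ^ 2 * r (x, a) ^ 2) ∂p := by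
    rw [hμ _ hu.integrable_sq]; simp only [u, mul_pow]
  have : Nonempty (Fin N) := ⟨⟨0, hN⟩⟩
  have hmse := integral_sampleMean_sub_sq_le (fun n => ⟨hS_meas n, hlaw n⟩)
    (fun _ _ hij => hS_indep.indepFun hij) hg_meas hg hu hL2d hguv
  rw [Fintype.card_fin, ← integral_sum_policy_mul_eq_integral_div_mul
    (fun x a => (hbstar_pos x a).ne') hμ (hu.integrable one_le_two), hu2,
    hμ _ hL2d.integrable_sq] at hmse
  exact hmse.trans (add_le_add le_rfl hg2)

/-- MSE upper bound for the UIPS estimator (Theorem 2 of the paper): with `N` i.i.d.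
logged samples from the joint logging law `μ` (`x ∼ p`, `a ∼ β*(·|x)`) and any measurable
weight `φ`,
`E_D[(V̂_UIPS − V(π))²] ≤ E_{β*}[(π/β*)² r²] · E_{β*}[((β*/β̂)φ − 1)²] + E_{β*}[(π/β̂)² φ²]`,
where `E_{β*}[h] = ∫_X Σ_a β*(a|x) h(x,a) dp(x)` and
`V̂_UIPS = (1/N) Σ_n (π(aₙ|xₙ)/β̂(aₙ|xₙ)) φ(xₙ,aₙ) r(xₙ,aₙ)`. -/
theorem stmt_2
    {X : Type*} [MeasurableSpace X] (p : Measure X) [IsProbabilityMeasure p]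
    {A : Type*} [Fintype A] [Nonempty A] [MeasurableSpace A] [MeasurableSingletonClass A]
    (pol bstar bhat : X → A → ℝ)
    (hpol_meas : ∀ a, Measurable fun x => pol x a)
    (hbstar_meas : ∀ a, Measurable fun x => bstar x a)
    (hbhat_meas : ∀ a, Measurable fun x => bhat x a)
    (hpol_sum : ∀ x, ∑ a, pol x a = 1)
    (hbstar_sum : ∀ x, ∑ a, bstar x a = 1)
    (hbhat_sum : ∀ x, ∑ a, bhat x a = 1)
    (hpol_nonneg : ∀ x a, 0 ≤ pol x a)
    (hbstar_pos : ∀ x a, 0 < bstar x a)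
    (hbhat_pos : ∀ x a, 0 < bhat x a)
    (r : X × A → ℝ) (hr_meas : Measurable r)
    (hr0 : ∀ z, 0 ≤ r z) (hr1 : ∀ z, r z ≤ 1)
    (φ : X × A → ℝ) (hφ_meas : Measurable φ)
    {Ω : Type*} [MeasurableSpace Ω] (P : Measure Ω) [IsProbabilityMeasure P]
    (N : ℕ) (hN : 1 ≤ N)
    (S : Fin N → Ω → X × A) (hS_meas : ∀ n, Measurable (S n))
    (hS_indep : ProbabilityTheory.iIndepFun S P)
    (μ : Measure (X × A)) [IsProbabilityMeasure μ]
    (hlaw : ∀ n, Measure.map (S n) P = μ)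
    (hμ : ∀ g : X × A → ℝ, Integrable g μ →
      ∫ z, g z ∂μ = ∫ x, ∑ a, bstar x a * g (x, a) ∂p)
    (hL2a : MemLp (fun z : X × A => pol z.1 z.2 * φ z * r z / bhat z.1 z.2) 2 μ)
    (hL2b : MemLp (fun z : X × A => pol z.1 z.2 * φ z / bhat z.1 z.2) 2 μ)
    (hL2c : MemLp (fun z : X × A => pol z.1 z.2 / bstar z.1 z.2) 2 μ)
    (hL2d : MemLp (fun z : X × A => bstar z.1 z.2 / bhat z.1 z.2 * φ z - 1) 2 μ) :
    (∫ ω, ((1 / (N : ℝ)) * ∑ n : Fin N,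
          pol (S n ω).1 (S n ω).2 / bhat (S n ω).1 (S n ω).2 * φ (S n ω) * r (S n ω)
        - ∫ x, ∑ a, pol x a * r (x, a) ∂p) ^ 2 ∂P)
      ≤ (∫ x, ∑ a, bstar x a * ((pol x a / bstar x a) ^ 2 * r (x, a) ^ 2) ∂p)
          * (∫ x, ∑ a, bstar x a * (bstar x a / bhat x a * φ (x, a) - 1) ^ 2 ∂p)
        + ∫ x, ∑ a, bstar x a * ((pol x a / bhat x a) ^ 2 * φ (x, a) ^ 2) ∂p :=
  stmt_2_general p pol bstar bhat hpol_meas hbhat_meas hbstar_pos r hr_meas hr0 hr1 φ hφ_meas P N hN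
    S hS_meas hS_indep μ hlaw hμ hL2a hL2b hL2c hL2d
end

section
/- Under the contextual-bandit off-policy setup, the bias of the weighted inverse-propensity estimator satisfies the Cauchy–Schwarz bound: | E_{β*}[ (π(a|x)/β̂(a|x)) φ(x,a) r(x,a) ] − V(π) | ≤ sqrt( E_{β*}[ (π(a|x)/β*(a|x))² r(x,a)² ] ) · sqrt( E_{β*}[ ( (β*(a|x)/β̂(a|x)) φ(x,a) − 1 )² ] ). -/
open MeasureTheory

/- The bias is `E_{β*}[f g]` for `f = (π/β*) r` and `g = (β*/β̂) φ − 1`, because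
`(π/β̂) φ r = f (g + 1)` and `E_{β*}[f] = V(π)`; the bound is then Cauchy–Schwarz in `L²(μ)`. -/

theorem abs_integral_mul_le_sqrt_integral_sq_mul_sqrt_integral_sq {α : Type*}
    [MeasurableSpace α] {μ : Measure α} {f g : α → ℝ} (hf : MemLp f 2 μ) (hg : MemLp g 2 μ) :
    |∫ z, f z * g z ∂μ| ≤ √(∫ z, f z ^ 2 ∂μ) * √(∫ z, g z ^ 2 ∂μ) := by
  have norm_rpow_two (h : α → ℝ) : (fun z => ‖h z‖ ^ (2 : ℝ)) = fun z => h z ^ 2 := by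
    funext z
    rw [Real.rpow_two, Real.norm_eq_abs, sq_abs]
  calc |∫ z, f z * g z ∂μ| ≤ ∫ z, ‖f z‖ * ‖g z‖ ∂μ := by
        simpa only [Real.norm_eq_abs, abs_mul] using norm_integral_le_integral_norm (μ := μ) (fun z => f z * g z)
    _ ≤ (∫ z, ‖f z‖ ^ (2 : ℝ) ∂μ) ^ (1 / (2 : ℝ)) * (∫ z, ‖g z‖ ^ (2 : ℝ) ∂μ) ^ (1 / (2 : ℝ)) :=
        integral_mul_norm_le_Lp_mul_Lq Real.HolderConjugate.two_two (by simpa using hf) (by simpa using hg)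
    _ = √(∫ z, f z ^ 2 ∂μ) * √(∫ z, g z ^ 2 ∂μ) := by
        rw [norm_rpow_two f, norm_rpow_two g, Real.sqrt_eq_rpow, Real.sqrt_eq_rpow]

theorem stmt_3_general
    {X : Type*} [MeasurableSpace X] (p : Measure X)
    {A : Type*} [Fintype A] [MeasurableSpace A]
    (pol bstar bhat : X → A → ℝ)
    (hbstar_pos : ∀ x a, 0 < bstar x a)
    (r : X × A → ℝ)
    (φ : X × A → ℝ)
    (μ : Measure (X × A)) [IsProbabilityMeasure μ]
    (hμ : ∀ g : X × A → ℝ, Integrable g μ →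
      ∫ z, g z ∂μ = ∫ x, ∑ a, bstar x a * g (x, a) ∂p)
    (hL2a : MemLp (fun z : X × A => pol z.1 z.2 / bstar z.1 z.2 * r z) 2 μ)
    (hL2b : MemLp (fun z : X × A => bstar z.1 z.2 / bhat z.1 z.2 * φ z - 1) 2 μ) :
    |(∫ x, ∑ a, bstar x a * (pol x a / bhat x a * φ (x, a) * r (x, a)) ∂p)
        - (∫ x, ∑ a, pol x a * r (x, a) ∂p)|
      ≤ Real.sqrt (∫ x, ∑ a, bstar x a * ((pol x a / bstar x a) ^ 2 * r (x, a) ^ 2) ∂p)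
          * Real.sqrt
              (∫ x, ∑ a, bstar x a * (bstar x a / bhat x a * φ (x, a) - 1) ^ 2 ∂p) := by
  set f : X × A → ℝ := fun z => pol z.1 z.2 / bstar z.1 z.2 * r z
  set g : X × A → ℝ := fun z => bstar z.1 z.2 / bhat z.1 z.2 * φ z - 1
  have hf : Integrable f μ := hL2a.integrable one_le_two
  have hfg : Integrable (fun z => f z * g z) μ := hL2a.integrable_mul hL2b
  have estimator_eq : (∫ x, ∑ a, bstar x a * (pol x a / bhat x a * φ (x, a) * r (x, a)) ∂p)
      = ∫ z, f z * g z + f z ∂μ := by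
    rw [hμ (fun z => f z * g z + f z) (hfg.add hf)]
    congr! 3 with x a
    simp only [f, g]
    field_simp [(hbstar_pos x a).ne']
    ring
  have value_eq : (∫ x, ∑ a, pol x a * r (x, a) ∂p) = ∫ z, f z ∂μ := by
    rw [hμ _ hf]
    congr! 3 with x a
    simp only [f]
    field_simp [(hbstar_pos x a).ne']
  have second_moment_f : (∫ x, ∑ a, bstar x a * ((pol x a / bstar x a) ^ 2 * r (x, a) ^ 2) ∂p)
      = ∫ z, f z ^ 2 ∂μ := by
    rw [hμ _ hL2a.integrable_sq]
    simp only [f, mul_pow]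
  rw [estimator_eq, value_eq, second_moment_f, ← hμ _ hL2b.integrable_sq,
    integral_add hfg hf, add_sub_cancel_right]
  exact abs_integral_mul_le_sqrt_integral_sq_mul_sqrt_integral_sq hL2a hL2b

/-- Cauchy–Schwarz bound on the bias of the weighted inverse-propensity estimator:
`|E_{β*}[(π/β̂)φ r] − V(π)| ≤ √(E_{β*}[(π/β*)² r²]) · √(E_{β*}[((β*/β̂)φ − 1)²])`,
where `E_{β*}[h] = ∫_X Σ_a β*(a|x) h(x,a) dp(x)` and `V(π) = ∫_X Σ_a π(a|x) r(x,a) dp(x)`. -/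
theorem stmt_3
    {X : Type*} [MeasurableSpace X] (p : Measure X) [IsProbabilityMeasure p]
    {A : Type*} [Fintype A] [Nonempty A] [MeasurableSpace A] [MeasurableSingletonClass A]
    (pol bstar bhat : X → A → ℝ)
    (hpol_meas : ∀ a, Measurable fun x => pol x a)
    (hbstar_meas : ∀ a, Measurable fun x => bstar x a)
    (hbhat_meas : ∀ a, Measurable fun x => bhat x a)
    (hpol_sum : ∀ x, ∑ a, pol x a = 1)
    (hbstar_sum : ∀ x, ∑ a, bstar x a = 1)
    (hbhat_sum : ∀ x, ∑ a, bhat x a = 1)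
    (hpol_nonneg : ∀ x a, 0 ≤ pol x a)
    (hbstar_pos : ∀ x a, 0 < bstar x a)
    (hbhat_pos : ∀ x a, 0 < bhat x a)
    (r : X × A → ℝ) (hr_meas : Measurable r)
    (hr0 : ∀ z, 0 ≤ r z) (hr1 : ∀ z, r z ≤ 1)
    (φ : X × A → ℝ) (hφ_meas : Measurable φ)
    (μ : Measure (X × A)) [IsProbabilityMeasure μ]
    (hμ : ∀ g : X × A → ℝ, Integrable g μ →
      ∫ z, g z ∂μ = ∫ x, ∑ a, bstar x a * g (x, a) ∂p)
    (hL2a : MemLp (fun z : X × A => pol z.1 z.2 / bstar z.1 z.2 * r z) 2 μ)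
    (hL2b : MemLp (fun z : X × A => bstar z.1 z.2 / bhat z.1 z.2 * φ z - 1) 2 μ) :
    |(∫ x, ∑ a, bstar x a * (pol x a / bhat x a * φ (x, a) * r (x, a)) ∂p)
        - (∫ x, ∑ a, pol x a * r (x, a) ∂p)|
      ≤ Real.sqrt (∫ x, ∑ a, bstar x a * ((pol x a / bstar x a) ^ 2 * r (x, a) ^ 2) ∂p)
          * Real.sqrt
              (∫ x, ∑ a, bstar x a * (bstar x a / bhat x a * φ (x, a) - 1) ^ 2 ∂p) :=
  stmt_3_general p pol bstar bhat hbstar_pos r φ μ hμ hL2a hL2b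
end

section
/- The weight φ* = min( λ / ( (λ/η)e^{−u} + (ηπ²/β̂²)e^{u} ), 2η/(e^{u} + e^{−u}) ) is a global minimizer over nonnegative weights of the worst-case objective: φ* ≥ 0 and for every φ ≥ 0, sup_{β ∈ [b⁻, b⁺]} T(φ*, β) ≤ sup_{β ∈ [b⁻, b⁺]} T(φ, β), where b⁻ = (β̂/η)e^{−u} and b⁺ = (β̂/η)e^{u}. -/
/-- The bias-variance objective `T(φ, β) = λ(βφ/β̂ − 1)² + (π²/β̂²)φ²`. -/
noncomputable def T (lam bhat pi : ℝ) (φ β : ℝ) : ℝ :=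
  lam * (β * φ / bhat - 1) ^ 2 + pi ^ 2 / bhat ^ 2 * φ ^ 2

/-!
For fixed `φ` the objective `T(φ, ·)` is a convex quadratic in `β`, so the worst case over
`[b⁻, b⁺]` is `max (f φ) (g φ)` with `f = T(·, b⁻)` and `g = T(·, b⁺)`. Both are convex quadratics
in `φ`; they cross at `q = 2β̂/(b⁻ + b⁺) = 2η/(eᵘ + e⁻ᵘ)`, with `g ≤ f` on `[0, q]`, and `f` is
minimal at `p = λ/((λ/η)e⁻ᵘ + (ηπ²/β̂²)eᵘ)` while the minimizer of `g` lies left of `q`.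
Hence `max f g` is minimal at `min p q`: at `p` if `p ≤ q`, and otherwise at the crossing point,
where `f` is still decreasing and `g` already increasing.
-/

open Set

lemma ConvexOn.sSup_image_Icc {f : ℝ → ℝ} {a b : ℝ} (hab : a ≤ b)
    (hf : ConvexOn ℝ (Icc a b) f) :
    sSup (f '' Icc a b) = max (f a) (f b) := by
  refine IsGreatest.csSup_eq ⟨?_, ?_⟩
  · rcases max_choice (f a) (f b) with h | h <;> rw [h]
    exacts [mem_image_of_mem f (left_mem_Icc.2 hab), mem_image_of_mem f (right_mem_Icc.2 hab)]
  · rintro _ ⟨x, hx, rfl⟩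
    exact hf.le_max_of_mem_Icc (left_mem_Icc.2 hab) (right_mem_Icc.2 hab) hx

section T

variable {lam bhat pi : ℝ}

lemma convexOn_T_snd (hlam : 0 ≤ lam) (φ : ℝ) : ConvexOn ℝ univ (T lam bhat pi φ) := by
  refine ⟨convex_univ, fun x _ y _ a b ha hb hab => ?_⟩
  obtain rfl : b = 1 - a := by linarith
  simp only [smul_eq_mul]
  have key : a * T lam bhat pi φ x + (1 - a) * T lam bhat pi φ y
      - T lam bhat pi φ (a * x + (1 - a) * y) = lam * a * (1 - a) * ((x - y) * φ / bhat) ^ 2 := by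
    unfold T; ring
  have : 0 ≤ lam * a * (1 - a) * ((x - y) * φ / bhat) ^ 2 := by positivity
  linarith

lemma sSup_T_image_Icc (hlam : 0 ≤ lam) (φ : ℝ) {lo hi : ℝ} (hlohi : lo ≤ hi) :
    sSup (T lam bhat pi φ '' Icc lo hi) = max (T lam bhat pi φ lo) (T lam bhat pi φ hi) :=
  ConvexOn.sSup_image_Icc hlohi ((convexOn_T_snd hlam φ).subset (subset_univ _) (convex_Icc _ _))

noncomputable def argminT (lam bhat pi β : ℝ) : ℝ := lam * β * bhat / (lam * β ^ 2 + pi ^ 2)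

variable {β : ℝ}

lemma T_eq_sq_add (hbhat : bhat ≠ 0) (hβ : lam * β ^ 2 + pi ^ 2 ≠ 0) (φ : ℝ) :
    T lam bhat pi φ β = (lam * β ^ 2 + pi ^ 2) / bhat ^ 2 * (φ - argminT lam bhat pi β) ^ 2
      + lam * pi ^ 2 / (lam * β ^ 2 + pi ^ 2) := by
  unfold T argminT
  field_simp
  ring

lemma T_sub_T_snd (hbhat : bhat ≠ 0) (φ β β' : ℝ) :
    T lam bhat pi φ β - T lam bhat pi φ β'
      = lam * φ * (β' - β) * (2 * bhat - φ * (β + β')) / bhat ^ 2 := by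
  unfold T
  field_simp
  ring

lemma T_snd_eq_of_mul_add_eq (hbhat : bhat ≠ 0) {φ β β' : ℝ} (h : φ * (β + β') = 2 * bhat) :
    T lam bhat pi φ β = T lam bhat pi φ β' := by
  rw [← sub_eq_zero, T_sub_T_snd hbhat, h, sub_self, mul_zero, zero_div]

lemma T_snd_le_of_mul_add_le (hbhat : bhat ≠ 0) (hlam : 0 ≤ lam) {φ β β' : ℝ} (hφ : 0 ≤ φ)
    (hββ' : β ≤ β') (h : φ * (β + β') ≤ 2 * bhat) :
    T lam bhat pi φ β' ≤ T lam bhat pi φ β := by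
  rw [← sub_nonneg, T_sub_T_snd hbhat]
  have := sub_nonneg.2 hββ'
  have := sub_nonneg.2 h
  positivity

lemma T_argminT_le (hbhat : bhat ≠ 0) (hβ : 0 < lam * β ^ 2 + pi ^ 2) (φ : ℝ) :
    T lam bhat pi (argminT lam bhat pi β) β ≤ T lam bhat pi φ β := by
  rw [T_eq_sq_add hbhat hβ.ne', T_eq_sq_add hbhat hβ.ne', sub_self]
  have : 0 ≤ (lam * β ^ 2 + pi ^ 2) / bhat ^ 2 * (φ - argminT lam bhat pi β) ^ 2 := by positivity
  linarith

lemma antitoneOn_T_fst (hbhat : bhat ≠ 0) (hβ : 0 < lam * β ^ 2 + pi ^ 2) :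
    AntitoneOn (fun φ => T lam bhat pi φ β) (Iic (argminT lam bhat pi β)) := by
  intro x hx y hy hxy
  simp only [T_eq_sq_add hbhat hβ.ne']
  have : (y - argminT lam bhat pi β) ^ 2 ≤ (x - argminT lam bhat pi β) ^ 2 := by
    simp only [mem_Iic] at hx hy; nlinarith
  gcongr

lemma monotoneOn_T_fst (hbhat : bhat ≠ 0) (hβ : 0 < lam * β ^ 2 + pi ^ 2) :
    MonotoneOn (fun φ => T lam bhat pi φ β) (Ici (argminT lam bhat pi β)) := by
  intro x hx y hy hxy
  simp only [T_eq_sq_add hbhat hβ.ne']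
  have : (x - argminT lam bhat pi β) ^ 2 ≤ (y - argminT lam bhat pi β) ^ 2 := by
    simp only [mem_Ici] at hx hy; nlinarith
  gcongr

lemma argminT_nonneg (hlam : 0 ≤ lam) (hbhat : 0 ≤ bhat) (hβ : 0 ≤ β) :
    0 ≤ argminT lam bhat pi β := by
  unfold argminT; positivity

lemma argminT_le_div (hlam : 0 < lam) (hbhat : 0 ≤ bhat) (hβ : 0 < β) :
    argminT lam bhat pi β ≤ bhat / β := by
  unfold argminT
  rw [div_le_div_iff₀ (by positivity) hβ]
  nlinarith [mul_nonneg hbhat (sq_nonneg pi)]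

end T

lemma max_le_max_of_crossing {f g : ℝ → ℝ} {p q : ℝ} (hf_min : ∀ ψ, f p ≤ f ψ)
    (hf_anti : AntitoneOn f (Iic p)) (hg_mono : MonotoneOn g (Ici q)) (hfg : f q = g q)
    (hgf : p ≤ q → g p ≤ f p) (φ : ℝ) :
    max (f (min p q)) (g (min p q)) ≤ max (f φ) (g φ) := by
  rcases le_total p q with hpq | hqp
  · rw [min_eq_left hpq, max_eq_left (hgf hpq)]
    exact le_max_of_le_left (hf_min φ)
  · rw [min_eq_right hqp, hfg, max_self]
    rcases le_total φ q with hφq | hqφ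
    · rw [← hfg]
      exact le_max_of_le_left (hf_anti (mem_Iic.2 (hφq.trans hqp)) (mem_Iic.2 hqp) hφq)
    · exact le_max_of_le_right (hg_mono (mem_Ici.2 le_rfl) hqφ hqφ)

theorem sSup_T_image_Icc_min_le {lam bhat pi lo hi : ℝ} (hlam : 0 < lam) (hbhat : 0 < bhat)
    (hlo : 0 < lo) (hlohi : lo ≤ hi) (φ : ℝ) :
    sSup (T lam bhat pi (min (argminT lam bhat pi lo) (2 * bhat / (lo + hi))) '' Icc lo hi)
      ≤ sSup (T lam bhat pi φ '' Icc lo hi) := by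
  have hhi : 0 < hi := hlo.trans_le hlohi
  have hpos : ∀ {β}, 0 < β → 0 < lam * β ^ 2 + pi ^ 2 := fun hβ => by positivity
  rw [sSup_T_image_Icc hlam.le _ hlohi, sSup_T_image_Icc hlam.le _ hlohi]
  refine max_le_max_of_crossing (f := fun ψ => T lam bhat pi ψ lo)
    (g := fun ψ => T lam bhat pi ψ hi) (T_argminT_le hbhat.ne' (hpos hlo))
    (antitoneOn_T_fst hbhat.ne' (hpos hlo)) ?_ ?_ ?_ φ
  · refine (monotoneOn_T_fst hbhat.ne' (hpos hhi)).mono (Ici_subset_Ici.2 ?_)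
    calc argminT lam bhat pi hi ≤ bhat / hi := argminT_le_div hlam hbhat.le hhi
      _ = 2 * bhat / (hi + hi) := by field_simp; ring
      _ ≤ 2 * bhat / (lo + hi) := by gcongr
  · exact T_snd_eq_of_mul_add_eq hbhat.ne' (div_mul_cancel₀ _ (by positivity))
  · intro hpq
    exact T_snd_le_of_mul_add_le hbhat.ne' hlam.le (argminT_nonneg hlam.le hbhat.le hlo.le)
      hlohi ((le_div_iff₀ (by positivity)).1 hpq)

theorem stmt_6_general (lam bhat pi η u : ℝ) (hlam : 0 < lam) (hbhat : 0 < bhat)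
    (hη : 0 < η) (hu : 0 ≤ u) :
    0 ≤ min (lam / (lam / η * Real.exp (-u) + η * pi ^ 2 / bhat ^ 2 * Real.exp u))
          (2 * η / (Real.exp u + Real.exp (-u))) ∧
    ∀ φ : ℝ, 0 ≤ φ →
      sSup ((fun β => T lam bhat pi
          (min (lam / (lam / η * Real.exp (-u) + η * pi ^ 2 / bhat ^ 2 * Real.exp u))
            (2 * η / (Real.exp u + Real.exp (-u)))) β) ''
          Set.Icc (bhat / η * Real.exp (-u)) (bhat / η * Real.exp u))
        ≤ sSup ((fun β => T lam bhat pi φ β) ''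
            Set.Icc (bhat / η * Real.exp (-u)) (bhat / η * Real.exp u)) := by
  have hexp : Real.exp (-u) * Real.exp u = 1 := by
    rw [← Real.exp_add, neg_add_cancel, Real.exp_zero]
  have hp : lam / (lam / η * Real.exp (-u) + η * pi ^ 2 / bhat ^ 2 * Real.exp u)
      = argminT lam bhat pi (bhat / η * Real.exp (-u)) := by
    unfold argminT
    field_simp
    linear_combination (-(pi ^ 2 * η ^ 2)) * hexp
  have hq : 2 * η / (Real.exp u + Real.exp (-u))
      = 2 * bhat / (bhat / η * Real.exp (-u) + bhat / η * Real.exp u) := by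
    field_simp
    ring
  rw [hp, hq]
  refine ⟨le_min (argminT_nonneg hlam.le hbhat.le (by positivity)) (by positivity),
    fun φ _ => sSup_T_image_Icc_min_le hlam hbhat (by positivity) ?_ φ⟩
  gcongr
  linarith

/-- The weight `φ* = min( λ / ((λ/η)e^{−u} + (ηπ²/β̂²)e^{u}), 2η/(e^{u} + e^{−u}) )` is a
nonnegative global minimizer, over nonnegative weights, of the worst-case objective
`sup_{β ∈ [b⁻, b⁺]} T(φ, β)`, where `b⁻ = (β̂/η)e^{−u}` and `b⁺ = (β̂/η)e^{u}`. -/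
theorem stmt_6 (lam bhat pi η u : ℝ) (hlam : 0 < lam) (hbhat : 0 < bhat) (hpi : 0 ≤ pi)
    (hη : 0 < η) (hu : 0 ≤ u) :
    0 ≤ min (lam / (lam / η * Real.exp (-u) + η * pi ^ 2 / bhat ^ 2 * Real.exp u))
          (2 * η / (Real.exp u + Real.exp (-u))) ∧
    ∀ φ : ℝ, 0 ≤ φ →
      sSup ((fun β => T lam bhat pi
          (min (lam / (lam / η * Real.exp (-u) + η * pi ^ 2 / bhat ^ 2 * Real.exp u))
            (2 * η / (Real.exp u + Real.exp (-u)))) β) ''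
          Set.Icc (bhat / η * Real.exp (-u)) (bhat / η * Real.exp u))
        ≤ sSup ((fun β => T lam bhat pi φ β) ''
            Set.Icc (bhat / η * Real.exp (-u)) (bhat / η * Real.exp u)) :=
  stmt_6_general lam bhat pi η u hlam hbhat hη hu
end

section
/- The worst-case objective value achieved by the optimal uncertainty-aware weight φ* is no larger than that achieved by the plain weight 1 used by BIPS: sup_{β ∈ [b⁻, b⁺]} T(φ*, β) ≤ sup_{β ∈ [b⁻, b⁺]} T(1, β), where φ* = min( λ / ( (λ/η)e^{−u} + (ηπ²/β̂²)e^{u} ), 2η/(e^{u} + e^{−u}) ). In particular, the UIPS estimator with weight φ* achieves a smaller upper bound on its mean squared error than the BIPS estimator. -/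
/-!
Write `s = β / β̂` and `p = π² / β̂²`, so that `β ∈ [b⁻, b⁺]` becomes `s ∈ [α, m]` with
`α = e^{−u}/η`, `m = e^{u}/η`, and `T(φ, β) = λ(sφ − 1)² + pφ²`. The weight `φ*` is
`min φ₀ c`, where `φ₀ = λα/(λα² + p)` minimises the objective at `s = α` and `c = 2/(α + m)`
balances the bias at the two endpoints, `αc − 1 = −(mc − 1)`.

For `0 ≤ φ ≤ c` the bias `|sφ − 1|` over `[α, m]` is largest at `s = α`, so the worst case
of `φ*` is attained at `α`. There the objective is a parabola in `φ` with vertex `φ₀`, and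
`φ*` is at least as close to `φ₀` as `min 1 c`. Finally `min 1 c` does no worse at `α` than
the weight `1` at one of the endpoints: trivially if `c ≥ 1`, and if `c < 1` because its value
at `α` equals its value at `m`, where `1 ≤ mc ≤ m` and `c² ≤ 1`.
-/

open Set

section Objective

variable (lam p : ℝ)

noncomputable def quadObj (φ s : ℝ) : ℝ :=
  lam * (s * φ - 1) ^ 2 + p * φ ^ 2

variable {lam p}

lemma T_eq_quadObj (bhat pi φ β : ℝ) :
    T lam bhat pi φ β = quadObj lam (pi ^ 2 / bhat ^ 2) φ (β / bhat) := by
  unfold T quadObj; ring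

lemma quadObj_le_left {α m φ s : ℝ} (hlam : 0 ≤ lam) (hφ : 0 ≤ φ)
    (hφc : φ * (α + m) ≤ 2) (hs : s ∈ Icc α m) :
    quadObj lam p φ s ≤ quadObj lam p φ α := by
  obtain ⟨hαs, hsm⟩ := hs
  have hbias : (s * φ - 1) ^ 2 ≤ (α * φ - 1) ^ 2 := by
    have h₁ : 0 ≤ (s - α) * φ := mul_nonneg (by linarith) hφ
    have h₂ : 0 ≤ 2 - (s + α) * φ := by nlinarith
    nlinarith
  unfold quadObj
  gcongr

lemma quadObj_sub_quadObj_vertex {α φ₀ : ℝ} (hφ₀ : φ₀ * (lam * α ^ 2 + p) = lam * α)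
    (ψ : ℝ) :
    quadObj lam p ψ α - quadObj lam p φ₀ α = (lam * α ^ 2 + p) * (ψ - φ₀) ^ 2 := by
  unfold quadObj
  linear_combination (2 * (ψ - φ₀)) * hφ₀

lemma quadObj_le_of_abs_sub_vertex_le {α φ₀ φ ψ : ℝ} (hD : 0 ≤ lam * α ^ 2 + p)
    (hφ₀ : φ₀ * (lam * α ^ 2 + p) = lam * α) (h : |φ - φ₀| ≤ |ψ - φ₀|) :
    quadObj lam p φ α ≤ quadObj lam p ψ α := by
  have hsq : (φ - φ₀) ^ 2 ≤ (ψ - φ₀) ^ 2 := sq_le_sq.2 h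
  have := quadObj_sub_quadObj_vertex hφ₀ φ
  have := quadObj_sub_quadObj_vertex hφ₀ ψ
  nlinarith [mul_le_mul_of_nonneg_left hsq hD]

lemma quadObj_min_one_le_max {α m c : ℝ} (hlam : 0 ≤ lam) (hp : 0 ≤ p) (hα : 0 ≤ α)
    (hαm : α ≤ m) (hc : c * (α + m) = 2) :
    quadObj lam p (min 1 c) α ≤ max (quadObj lam p 1 α) (quadObj lam p 1 m) := by
  rcases le_total 1 c with h1c | hc1
  · rw [min_eq_left h1c]
    exact le_max_left _ _
  · rw [min_eq_right hc1]
    have hc0 : 0 ≤ c := by nlinarith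
    have hmc : 1 ≤ m * c := by nlinarith
    have hmcm : m * c ≤ m := by nlinarith
    have hbalance : α * c - 1 = -(m * c - 1) := by linear_combination hc
    calc quadObj lam p c α = lam * (m * c - 1) ^ 2 + p * c ^ 2 := by
          rw [quadObj, hbalance, neg_sq]
      _ ≤ lam * (m * 1 - 1) ^ 2 + p * 1 ^ 2 := by
          gcongr
          linarith
      _ ≤ _ := le_max_right _ _

end Objective

lemma abs_min_sub_le_abs_sub {a c ψ : ℝ} (hψ : ψ ≤ c) : |min a c - a| ≤ |ψ - a| := by
  rcases le_total a c with h | h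
  · simp [min_eq_left h]
  · rw [min_eq_right h, abs_sub_comm, abs_sub_comm ψ,
      abs_of_nonneg (sub_nonneg.2 h), abs_of_nonneg (by linarith)]
    linarith

lemma quadObj_min_le_max {lam p α m s : ℝ} (hlam : 0 < lam) (hp : 0 ≤ p) (hα : 0 < α)
    (hs : s ∈ Icc α m) :
    quadObj lam p (min (lam * α / (lam * α ^ 2 + p)) (2 / (α + m))) s
      ≤ max (quadObj lam p 1 α) (quadObj lam p 1 m) := by
  have hαm : α ≤ m := hs.1.trans hs.2
  have hD : 0 < lam * α ^ 2 + p := by positivity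
  have hαm0 : 0 < α + m := by linarith
  have hvertex : lam * α / (lam * α ^ 2 + p) * (lam * α ^ 2 + p) = lam * α :=
    div_mul_cancel₀ _ hD.ne'
  have hbalance : 2 / (α + m) * (α + m) = 2 := div_mul_cancel₀ _ hαm0.ne'
  calc _ ≤ quadObj lam p (min (lam * α / (lam * α ^ 2 + p)) (2 / (α + m))) α :=
        quadObj_le_left hlam.le (by positivity) ((mul_le_mul_of_nonneg_right
          (min_le_right _ _) hαm0.le).trans hbalance.le) hs
    _ ≤ quadObj lam p (min 1 (2 / (α + m))) α :=
        quadObj_le_of_abs_sub_vertex_le hD.le hvertex (abs_min_sub_le_abs_sub (min_le_right _ _))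
    _ ≤ _ := quadObj_min_one_le_max hlam.le hp hα.le hαm hbalance

lemma sSup_image_Icc_le_of_le_max {f g : ℝ → ℝ} {a b : ℝ} (hg : ContinuousOn g (Icc a b))
    (h : ∀ x ∈ Icc a b, f x ≤ max (g a) (g b)) :
    sSup (f '' Icc a b) ≤ sSup (g '' Icc a b) := by
  rcases le_or_gt a b with hab | hba
  · have hbdd : BddAbove (g '' Icc a b) := (isCompact_Icc.image_of_continuousOn hg).bddAbove
    refine csSup_le ((nonempty_Icc.2 hab).image f) ?_
    rintro _ ⟨x, hx, rfl⟩
    exact (h x hx).trans (max_le (le_csSup hbdd (mem_image_of_mem g (left_mem_Icc.2 hab)))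
      (le_csSup hbdd (mem_image_of_mem g (right_mem_Icc.2 hab))))
  · simp [Icc_eq_empty_of_lt hba]

theorem stmt_7_general (lam bhat pi η u : ℝ) (hlam : 0 < lam) (hbhat : 0 < bhat)
    (hη : 0 < η) :
    sSup ((fun β => T lam bhat pi
        (min (lam / (lam / η * Real.exp (-u) + η * pi ^ 2 / bhat ^ 2 * Real.exp u))
          (2 * η / (Real.exp u + Real.exp (-u)))) β) ''
        Set.Icc (bhat / η * Real.exp (-u)) (bhat / η * Real.exp u))
      ≤ sSup ((fun β => T lam bhat pi 1 β) ''
          Set.Icc (bhat / η * Real.exp (-u)) (bhat / η * Real.exp u)) := by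
  have hvertex : lam / (lam / η * Real.exp (-u) + η * pi ^ 2 / bhat ^ 2 * Real.exp u)
      = lam * (Real.exp (-u) / η) / (lam * (Real.exp (-u) / η) ^ 2 + pi ^ 2 / bhat ^ 2) := by
    rw [Real.exp_neg]
    field_simp
  have hbalance : 2 * η / (Real.exp u + Real.exp (-u))
      = 2 / (Real.exp (-u) / η + Real.exp u / η) := by
    field_simp; ring
  have hend : ∀ v, bhat / η * Real.exp v / bhat = Real.exp v / η := fun v => by
    field_simp
  rw [hvertex, hbalance]
  refine sSup_image_Icc_le_of_le_max (by unfold T; fun_prop) fun β hβ => ?_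
  simp only [T_eq_quadObj, hend]
  refine quadObj_min_le_max hlam (by positivity) (by positivity) ⟨?_, ?_⟩
  · rw [← hend]; gcongr; exact hβ.1
  · rw [← hend]; gcongr; exact hβ.2

/-- The worst-case objective value (over `β ∈ [b⁻, b⁺]` with `b⁻ = (β̂/η)e^{−u}` and
`b⁺ = (β̂/η)e^{u}`) achieved by the optimal uncertainty-aware weight
`φ* = min( λ / ((λ/η)e^{−u} + (ηπ²/β̂²)e^{u}), 2η/(e^{u} + e^{−u}) )` is no larger than that
achieved by the plain weight `1` used by BIPS: UIPS achieves a smaller upper bound on its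
mean squared error than BIPS. -/
theorem stmt_7 (lam bhat pi η u : ℝ) (hlam : 0 < lam) (hbhat : 0 < bhat) (hpi : 0 ≤ pi)
    (hη : 0 < η) (hu : 0 ≤ u) :
    sSup ((fun β => T lam bhat pi
        (min (lam / (lam / η * Real.exp (-u) + η * pi ^ 2 / bhat ^ 2 * Real.exp u))
          (2 * η / (Real.exp u + Real.exp (-u)))) β) ''
        Set.Icc (bhat / η * Real.exp (-u)) (bhat / η * Real.exp u))
      ≤ sSup ((fun β => T lam bhat pi 1 β) ''
          Set.Icc (bhat / η * Real.exp (-u)) (bhat / η * Real.exp u)) :=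
  stmt_7_general lam bhat pi η u hlam hbhat hη
end

section
/- If β* lies in the confidence interval [b⁻, b⁺] with b⁻ = (β̂/η)e^{−u} and b⁺ = (β̂/η)e^{u}, then the effective propensity correction ratio of the optimal uncertainty-aware weight satisfies 0 < (β*/β̂)·φ* < 2, where φ* = min( λ / ( (λ/η)e^{−u} + (ηπ²/β̂²)e^{u} ), 2η/(e^{u} + e^{−u}) ); in particular | (β*/β̂)·φ* − 1 | < 1. -/
/-- If `β*` lies in the confidence interval `[(β̂/η)e^{−u}, (β̂/η)e^{u}]`, then the effective
propensity correction ratio of the optimal uncertainty-aware weight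
`φ* = min( λ / ((λ/η)e^{−u} + (ηπ²/β̂²)e^{u}), 2η/(e^{u} + e^{−u}) )` satisfies
`0 < (β*/β̂)·φ* < 2`; in particular `|(β*/β̂)·φ* − 1| < 1`. -/
theorem stmt_11 (lam bhat pi η u βstar : ℝ) (hlam : 0 < lam) (hbhat : 0 < bhat)
    (hpi : 0 ≤ pi) (hη : 0 < η) (hu : 0 ≤ u)
    (hlo : bhat / η * Real.exp (-u) ≤ βstar) (hhi : βstar ≤ bhat / η * Real.exp u) :
    0 < βstar / bhat *
        min (lam / (lam / η * Real.exp (-u) + η * pi ^ 2 / bhat ^ 2 * Real.exp u))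
          (2 * η / (Real.exp u + Real.exp (-u))) ∧
    βstar / bhat *
        min (lam / (lam / η * Real.exp (-u) + η * pi ^ 2 / bhat ^ 2 * Real.exp u))
          (2 * η / (Real.exp u + Real.exp (-u))) < 2 ∧
    |βstar / bhat *
        min (lam / (lam / η * Real.exp (-u) + η * pi ^ 2 / bhat ^ 2 * Real.exp u))
          (2 * η / (Real.exp u + Real.exp (-u))) - 1| < 1 := by
  have hE : 0 < Real.exp u := Real.exp_pos u
  have hF : 0 < Real.exp (-u) := Real.exp_pos (-u)
  have hβ : 0 < βstar := lt_of_lt_of_le (by positivity) hlo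
  have hden : 0 < lam / η * Real.exp (-u) + η * pi ^ 2 / bhat ^ 2 * Real.exp u := by
    have : 0 < lam / η * Real.exp (-u) := by positivity
    nlinarith [mul_nonneg (by positivity : (0:ℝ) ≤ η * pi ^ 2 / bhat ^ 2) hE.le]
  have hφ : 0 < min (lam / (lam / η * Real.exp (-u) + η * pi ^ 2 / bhat ^ 2 * Real.exp u))
      (2 * η / (Real.exp u + Real.exp (-u))) := by
    apply lt_min
    · positivity
    · positivity
  have hr : 0 < βstar / bhat := by positivity
  have hpos : 0 < βstar / bhat *
      min (lam / (lam / η * Real.exp (-u) + η * pi ^ 2 / bhat ^ 2 * Real.exp u))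
        (2 * η / (Real.exp u + Real.exp (-u))) := mul_pos hr hφ
  have hrle : βstar / bhat ≤ Real.exp u / η := by
    rw [div_le_div_iff₀ hbhat hη]
    have h := hhi
    rw [div_mul_eq_mul_div, le_div_iff₀ hη] at h
    nlinarith [h]
  have hlt2 : βstar / bhat *
      min (lam / (lam / η * Real.exp (-u) + η * pi ^ 2 / bhat ^ 2 * Real.exp u))
        (2 * η / (Real.exp u + Real.exp (-u))) < 2 := by
    have h1 : βstar / bhat *
        min (lam / (lam / η * Real.exp (-u) + η * pi ^ 2 / bhat ^ 2 * Real.exp u))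
          (2 * η / (Real.exp u + Real.exp (-u))) ≤
        (Real.exp u / η) * (2 * η / (Real.exp u + Real.exp (-u))) := by
      apply mul_le_mul hrle (min_le_right _ _) hφ.le (by positivity)
    have h2 : (Real.exp u / η) * (2 * η / (Real.exp u + Real.exp (-u))) < 2 := by
      rw [div_mul_div_comm, div_lt_iff₀ (by positivity)]
      ring_nf
      nlinarith
    linarith
  exact ⟨hpos, hlt2, by rw [abs_lt]; constructor <;> linarith⟩
end

section
/- One-step descent under biased and noisy gradients: if the step size satisfies 0 < η ≤ 1/((M+1)L) and x' = x − η(∇f(x) + b + δ), where x is a square-integrable random vector, b and δ are random vectors satisfying almost surely ‖b‖ ≤ φ·‖∇f(x)‖ with 0 < φ < 1, E[⟨δ, ∇f(x)⟩] = 0, E[⟨δ, b⟩] = 0, and E[‖δ‖²] ≤ M·E[‖b + ∇f(x)‖²] + σ², then E[f(x')] ≤ E[f(x)] + (η/2)(φ − 1)·E[‖∇f(x)‖²] + (Lη²/2)·σ². -/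
/-! Write `g = ∇f(x)`, `e = b + g` and `v = e + δ` for the step direction. The descent lemma
gives `f(x') ≤ f(x) - η⟪g, v⟫ + (Lη²/2)‖v‖²` pointwise. Since `∇f` is Lipschitz, `g` is
square-integrable along with `x`, so every term has an expectation. The noise is orthogonal in
`L²` to `g` and `b`, so `E⟪g, v⟫ = E⟪g, e⟫` and `E‖v‖² = E‖e‖² + E‖δ‖² ≤ (M + 1)E‖e‖² + σ²`,
and the step-size condition `(M + 1)Lη ≤ 1` bounds `(M + 1)(Lη²/2)E‖e‖²` by `(η/2)E‖e‖²`.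
What is left is `(η/2)E[‖e‖² - 2⟪g, e⟫] = (η/2)E[‖b‖² - ‖g‖²]`, and `‖b‖ ≤ φ‖g‖ ≤ ‖g‖`
gives `‖b‖² ≤ φ‖g‖²`. -/

open MeasureTheory
open scoped RealInnerProductSpace

section Descent

variable {E : Type*} [NormedAddCommGroup E] [InnerProductSpace ℝ E] [CompleteSpace E]

theorem HasGradientAt.hasDerivAt_comp_add_smul {f : E → ℝ} {g y u : E} {t : ℝ}
    (hf : HasGradientAt f g (y + t • u)) :
    HasDerivAt (fun s : ℝ => f (y + s • u)) ⟪g, u⟫ t := by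
  have hline : HasDerivAt (fun s : ℝ => y + s • u) u t := by
    simpa using ((hasDerivAt_id t).smul_const u).const_add y
  exact (hasGradientAt_iff_hasFDerivAt.mp hf).comp_hasDerivAt t hline

theorem le_add_inner_add_of_lipschitz_gradient {f : E → ℝ} {f' : E → E}
    (hgrad : ∀ y, HasGradientAt f (f' y) y) {L : ℝ}
    (hlip : ∀ y z, ‖f' y - f' z‖ ≤ L * ‖y - z‖) (y u : E) :
    f (y + u) ≤ f y + ⟪f' y, u⟫ + L / 2 * ‖u‖ ^ 2 := by
  have hderiv : ∀ t : ℝ, HasDerivAt (fun s : ℝ => f (y + s • u)) ⟪f' (y + t • u), u⟫ t :=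
    fun t => (hgrad _).hasDerivAt_comp_add_smul
  have hbound : ∀ t ∈ Set.Ico (0 : ℝ) 1,
      ⟪f' (y + t • u), u⟫ ≤ ⟪f' y, u⟫ + L * t * ‖u‖ ^ 2 := by
    intro t ht
    have hcs := real_inner_le_norm (f' (y + t • u) - f' y) u
    have hlip_t : ‖f' (y + t • u) - f' y‖ ≤ L * (t * ‖u‖) := by
      simpa [norm_smul, abs_of_nonneg ht.1] using hlip (y + t • u) y
    rw [inner_sub_left] at hcs
    nlinarith [norm_nonneg u]
  have hmodel : ∀ t : ℝ,
      HasDerivAt (fun s : ℝ => f y + s * ⟪f' y, u⟫ + L / 2 * ‖u‖ ^ 2 * s ^ 2)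
        (⟪f' y, u⟫ + L * t * ‖u‖ ^ 2) t := by
    intro t
    refine ((((hasDerivAt_id' t).mul_const _).const_add _).fun_add
      ((hasDerivAt_pow 2 t).const_mul _)).congr_deriv ?_
    push_cast
    ring
  have hend := image_le_of_deriv_right_le_deriv_boundary
    (fun t _ => (hderiv t).continuousAt.continuousWithinAt) (fun t _ => (hderiv t).hasDerivWithinAt)
    (by simp) (fun t _ => (hmodel t).continuousAt.continuousWithinAt)
    (fun t _ => (hmodel t).hasDerivWithinAt) hbound (Set.right_mem_Icc.2 zero_le_one)
  simpa using hend

theorem apply_sub_smul_le_of_lipschitz_gradient {f : E → ℝ} {f' : E → E}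
    (hgrad : ∀ y, HasGradientAt f (f' y) y) {L : ℝ}
    (hlip : ∀ y z, ‖f' y - f' z‖ ≤ L * ‖y - z‖) (y v : E) (η : ℝ) :
    f (y - η • v) ≤ f y + (-η * ⟪f' y, v⟫ + L * η ^ 2 / 2 * ‖v‖ ^ 2) := by
  have h := le_add_inner_add_of_lipschitz_gradient hgrad hlip y (-(η • v))
  rw [← sub_eq_add_neg, inner_neg_right, real_inner_smul_right, norm_neg, norm_smul,
    Real.norm_eq_abs, mul_pow, sq_abs] at h
  linarith

end Descent

theorem LipschitzWith.comp_memLp_of_isFiniteMeasure {Ω E F : Type*} [MeasurableSpace Ω]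
    {μ : Measure Ω} [IsFiniteMeasure μ] [NormedAddCommGroup E] [NormedAddCommGroup F]
    {p : ENNReal} {K : NNReal} {G : E → F} (hG : LipschitzWith K G) {u : Ω → E}
    (hu : MemLp u p μ) : MemLp (fun ω => G (u ω)) p μ := by
  have hshift : LipschitzWith K (fun y => G y - G 0) := by
    simpa using hG.sub (LipschitzWith.const (G 0))
  convert (hshift.comp_memLp (by simp) hu).add (memLp_const (G 0)) using 1
  ext ω
  simp

section SecondMoments

variable {Ω E : Type*} [MeasurableSpace Ω] {μ : Measure Ω}
  [NormedAddCommGroup E] [InnerProductSpace ℝ E] {u v w : Ω → E}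

theorem MeasureTheory.MemLp.integrable_inner (hu : MemLp u 2 μ) (hv : MemLp v 2 μ) :
    Integrable (fun ω => ⟪u ω, v ω⟫) μ :=
  (L2.integrable_inner (hu.toLp u) (hv.toLp v)).congr <| by
    filter_upwards [hu.coeFn_toLp, hv.coeFn_toLp] with ω huω hvω
    rw [huω, hvω]

theorem MeasureTheory.MemLp.integral_inner_add_right (hu : MemLp u 2 μ) (hv : MemLp v 2 μ)
    (hw : MemLp w 2 μ) :
    ∫ ω, ⟪u ω, v ω + w ω⟫ ∂μ = ∫ ω, ⟪u ω, v ω⟫ ∂μ + ∫ ω, ⟪u ω, w ω⟫ ∂μ := by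
  simp_rw [inner_add_right]
  exact integral_add (hu.integrable_inner hv) (hu.integrable_inner hw)

theorem MeasureTheory.MemLp.integral_norm_add_sq (hu : MemLp u 2 μ) (hv : MemLp v 2 μ) :
    ∫ ω, ‖u ω + v ω‖ ^ 2 ∂μ
      = ∫ ω, ‖u ω‖ ^ 2 ∂μ + 2 * ∫ ω, ⟪u ω, v ω⟫ ∂μ + ∫ ω, ‖v ω‖ ^ 2 ∂μ := by
  simp_rw [norm_add_sq_real]
  have hinner := (hu.integrable_inner hv).const_mul 2
  rw [integral_add (hu.norm.integrable_sq.fun_add hinner) hv.norm.integrable_sq,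
    integral_add hu.norm.integrable_sq hinner, integral_const_mul]

theorem integral_norm_add_sq_le_of_norm_le_mul {g b : Ω → E} (hg : MemLp g 2 μ)
    (hb : MemLp b 2 μ) {φ : ℝ} (hbias : ∀ᵐ ω ∂μ, ‖b ω‖ ≤ φ * ‖g ω‖) (hφ : φ ≤ 1) :
    ∫ ω, ‖b ω + g ω‖ ^ 2 ∂μ
      ≤ 2 * ∫ ω, ⟪g ω, b ω + g ω⟫ ∂μ + (φ - 1) * ∫ ω, ‖g ω‖ ^ 2 ∂μ := by
  have hsq : ∫ ω, ‖b ω‖ ^ 2 ∂μ ≤ φ * ∫ ω, ‖g ω‖ ^ 2 ∂μ := by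
    rw [← integral_const_mul]
    refine integral_mono_ae hb.norm.integrable_sq (hg.norm.integrable_sq.const_mul φ) ?_
    filter_upwards [hbias] with ω hω
    have hle : ‖b ω‖ ≤ ‖g ω‖ := hω.trans (mul_le_of_le_one_left (norm_nonneg _) hφ)
    nlinarith [mul_le_mul hω hle (norm_nonneg _) ((norm_nonneg _).trans hω)]
  have hself : ∫ ω, ⟪g ω, g ω⟫ ∂μ = ∫ ω, ‖g ω‖ ^ 2 ∂μ := by
    simp_rw [real_inner_self_eq_norm_sq]
  have hcomm : ∫ ω, ⟪g ω, b ω⟫ ∂μ = ∫ ω, ⟪b ω, g ω⟫ ∂μ := by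
    simp_rw [real_inner_comm]
  rw [hb.integral_norm_add_sq hg, hg.integral_inner_add_right hb hg, hself, hcomm]
  linarith

theorem integral_biased_noisy_step_le {g b δ : Ω → E} (hg : MemLp g 2 μ) (hb : MemLp b 2 μ)
    (hδ : MemLp δ 2 μ) {φ M σ L η : ℝ} (hbias : ∀ᵐ ω ∂μ, ‖b ω‖ ≤ φ * ‖g ω‖) (hφ : φ ≤ 1)
    (hδg : ∫ ω, ⟪δ ω, g ω⟫ ∂μ = 0) (hδb : ∫ ω, ⟪δ ω, b ω⟫ ∂μ = 0)
    (hδvar : ∫ ω, ‖δ ω‖ ^ 2 ∂μ ≤ M * ∫ ω, ‖b ω + g ω‖ ^ 2 ∂μ + σ ^ 2)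
    (hL : 0 ≤ L) (hη : 0 ≤ η) (hstep : η * ((M + 1) * L) ≤ 1) :
    -η * ∫ ω, ⟪g ω, g ω + b ω + δ ω⟫ ∂μ + L * η ^ 2 / 2 * ∫ ω, ‖g ω + b ω + δ ω‖ ^ 2 ∂μ
      ≤ η / 2 * (φ - 1) * ∫ ω, ‖g ω‖ ^ 2 ∂μ + L * η ^ 2 / 2 * σ ^ 2 := by
  have he : MemLp (fun ω => b ω + g ω) 2 μ := hb.add hg
  simp_rw [add_comm (g _) (b _)]
  have hdir : ∫ ω, ⟪g ω, b ω + g ω + δ ω⟫ ∂μ = ∫ ω, ⟪g ω, b ω + g ω⟫ ∂μ := by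
    have hgδ : ∫ ω, ⟪g ω, δ ω⟫ ∂μ = 0 := by
      rw [← hδg]
      simp_rw [real_inner_comm (δ _)]
    rw [hg.integral_inner_add_right he hδ, hgδ, add_zero]
  have horth : ∫ ω, ⟪b ω + g ω, δ ω⟫ ∂μ = 0 := by
    simp_rw [real_inner_comm (δ _) (b _ + g _)]
    rw [hδ.integral_inner_add_right hb hg, hδb, hδg, add_zero]
  have hnorm : ∫ ω, ‖b ω + g ω + δ ω‖ ^ 2 ∂μ
      = ∫ ω, ‖b ω + g ω‖ ^ 2 ∂μ + ∫ ω, ‖δ ω‖ ^ 2 ∂μ := by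
    rw [he.integral_norm_add_sq hδ, horth]
    ring
  have hS : 0 ≤ ∫ ω, ‖b ω + g ω‖ ^ 2 ∂μ := integral_nonneg fun ω => sq_nonneg _
  have hdecrease := integral_norm_add_sq_le_of_norm_le_mul hg hb hbias hφ
  rw [hdir, hnorm]
  nlinarith [mul_le_mul_of_nonneg_left hδvar (by positivity : 0 ≤ L * η ^ 2 / 2),
    mul_nonneg (mul_nonneg hη hS) (sub_nonneg.2 hstep)]

end SecondMoments

theorem stmt_14_general {d : ℕ}
    (f : EuclideanSpace ℝ (Fin d) → ℝ)
    (f' : EuclideanSpace ℝ (Fin d) → EuclideanSpace ℝ (Fin d))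
    (hgrad : ∀ y, HasGradientAt f (f' y) y)
    (L : ℝ) (hL : 0 < L) (hlip : ∀ y z, ‖f' y - f' z‖ ≤ L * ‖y - z‖)
    (M σ : ℝ) (hM : 0 ≤ M)
    (φ : ℝ) (hφ1 : φ < 1)
    (η : ℝ) (hη0 : 0 < η) (hη1 : η ≤ 1 / ((M + 1) * L))
    {Ω : Type*} [MeasurableSpace Ω] (P : Measure Ω) [IsProbabilityMeasure P]
    (x b δ : Ω → EuclideanSpace ℝ (Fin d))
    (hxL2 : MemLp x 2 P) (hbL2 : MemLp b 2 P) (hδL2 : MemLp δ 2 P)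
    (hbias : ∀ᵐ ω ∂P, ‖b ω‖ ≤ φ * ‖f' (x ω)‖)
    (hδmean1 : ∫ ω, ⟪δ ω, f' (x ω)⟫ ∂P = 0)
    (hδmean2 : ∫ ω, ⟪δ ω, b ω⟫ ∂P = 0)
    (hδvar : ∫ ω, ‖δ ω‖ ^ 2 ∂P ≤ M * ∫ ω, ‖b ω + f' (x ω)‖ ^ 2 ∂P + σ ^ 2)
    (hf_int : Integrable (fun ω => f (x ω)) P)
    (hf'_int : Integrable (fun ω => f (x ω - η • (f' (x ω) + b ω + δ ω))) P) :
    ∫ ω, f (x ω - η • (f' (x ω) + b ω + δ ω)) ∂P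
      ≤ ∫ ω, f (x ω) ∂P + η / 2 * (φ - 1) * ∫ ω, ‖f' (x ω)‖ ^ 2 ∂P
        + L * η ^ 2 / 2 * σ ^ 2 := by
  have hf'_lip : LipschitzWith (Real.toNNReal L) f' :=
    LipschitzWith.of_dist_le' (by simpa only [dist_eq_norm] using hlip)
  have hg : MemLp (fun ω => f' (x ω)) 2 P := hf'_lip.comp_memLp_of_isFiniteMeasure hxL2
  have hv : MemLp (fun ω => f' (x ω) + b ω + δ ω) 2 P := (hg.add hbL2).add hδL2
  have hstep : η * ((M + 1) * L) ≤ 1 := (le_div_iff₀ (by positivity)).1 hη1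
  have hmodel_int := (hg.integrable_inner hv).const_mul (-η) |>.fun_add
    (hv.norm.integrable_sq.const_mul (L * η ^ 2 / 2))
  calc ∫ ω, f (x ω - η • (f' (x ω) + b ω + δ ω)) ∂P
      ≤ ∫ ω, (f (x ω) + (-η * ⟪f' (x ω), f' (x ω) + b ω + δ ω⟫
          + L * η ^ 2 / 2 * ‖f' (x ω) + b ω + δ ω‖ ^ 2)) ∂P :=
        integral_mono hf'_int (hf_int.fun_add hmodel_int) fun ω =>
          apply_sub_smul_le_of_lipschitz_gradient hgrad hlip _ _ η
    _ = ∫ ω, f (x ω) ∂P + (-η * ∫ ω, ⟪f' (x ω), f' (x ω) + b ω + δ ω⟫ ∂P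
          + L * η ^ 2 / 2 * ∫ ω, ‖f' (x ω) + b ω + δ ω‖ ^ 2 ∂P) := by
        rw [integral_add hf_int hmodel_int, integral_add ((hg.integrable_inner hv).const_mul _)
          (hv.norm.integrable_sq.const_mul _), integral_const_mul, integral_const_mul]
    _ ≤ _ := by
        linarith [integral_biased_noisy_step_le hg hbL2 hδL2 hbias hφ1.le hδmean1 hδmean2 hδvar
          hL.le hη0.le hstep]

/-- One-step descent under biased and noisy gradients: if `f : ℝ^d → ℝ` has an
`L`-Lipschitz gradient `∇f`, the step size satisfies `0 < η ≤ 1/((M+1)L)`, and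
`x' = x − η(∇f(x) + b + δ)` where almost surely `‖b‖ ≤ φ‖∇f(x)‖` with `0 < φ < 1`,
`E[⟨δ, ∇f(x)⟩] = 0`, `E[⟨δ, b⟩] = 0`, and `E[‖δ‖²] ≤ M·E[‖b + ∇f(x)‖²] + σ²`, then
`E[f(x')] ≤ E[f(x)] + (η/2)(φ − 1)E[‖∇f(x)‖²] + (Lη²/2)σ²`. -/
theorem stmt_14 {d : ℕ} (hd : 1 ≤ d)
    (f : EuclideanSpace ℝ (Fin d) → ℝ)
    (f' : EuclideanSpace ℝ (Fin d) → EuclideanSpace ℝ (Fin d))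
    (hgrad : ∀ y, HasGradientAt f (f' y) y)
    (L : ℝ) (hL : 0 < L) (hlip : ∀ y z, ‖f' y - f' z‖ ≤ L * ‖y - z‖)
    (M σ : ℝ) (hM : 0 ≤ M) (hσ : 0 ≤ σ)
    (φ : ℝ) (hφ0 : 0 < φ) (hφ1 : φ < 1)
    (η : ℝ) (hη0 : 0 < η) (hη1 : η ≤ 1 / ((M + 1) * L))
    {Ω : Type*} [MeasurableSpace Ω] (P : Measure Ω) [IsProbabilityMeasure P]
    (x b δ : Ω → EuclideanSpace ℝ (Fin d))
    (hxL2 : MemLp x 2 P) (hbL2 : MemLp b 2 P) (hδL2 : MemLp δ 2 P)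
    (hbias : ∀ᵐ ω ∂P, ‖b ω‖ ≤ φ * ‖f' (x ω)‖)
    (hδmean1 : ∫ ω, ⟪δ ω, f' (x ω)⟫ ∂P = 0)
    (hδmean2 : ∫ ω, ⟪δ ω, b ω⟫ ∂P = 0)
    (hδvar : ∫ ω, ‖δ ω‖ ^ 2 ∂P ≤ M * ∫ ω, ‖b ω + f' (x ω)‖ ^ 2 ∂P + σ ^ 2)
    (hf_int : Integrable (fun ω => f (x ω)) P)
    (hf'_int : Integrable (fun ω => f (x ω - η • (f' (x ω) + b ω + δ ω))) P)
    (hgrad_int : Integrable (fun ω => ‖f' (x ω)‖ ^ 2) P)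
    (hip1 : Integrable (fun ω => ⟪δ ω, f' (x ω)⟫) P)
    (hip2 : Integrable (fun ω => ⟪δ ω, b ω⟫) P)
    (hip3 : Integrable (fun ω => ⟪b ω, f' (x ω)⟫) P) :
    ∫ ω, f (x ω - η • (f' (x ω) + b ω + δ ω)) ∂P
      ≤ ∫ ω, f (x ω) ∂P + η / 2 * (φ - 1) * ∫ ω, ‖f' (x ω)‖ ^ 2 ∂P
        + L * η ^ 2 / 2 * σ ^ 2 :=
  stmt_14_general f f' hgrad L hL hlip M σ hM φ hφ1 η hη0 hη1 P x b δ hxL2 hbL2 hδL2 hbias hδmean1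
    hδmean2 hδvar hf_int hf'_int
end
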